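/- A 2-CNF formula F is satisfiable if and only if its implication digraph contains no contradictory circuit, i.e., there is no literal x with both x ⇝ x̄ and x̄ ⇝ x. Equivalently, F is satisfiable iff no variable lies in the same strongly connected component of the implication digraph as its negation. -/

import Mathlib

/-!
A satisfying assignment makes truth propagate along every edge `ū → v` of the implication
digraph (the clause `(u ∨ v)` forces `v` once `u` is false), so it cannot have paths
`x ⇝ x̄ ⇝ x`. Conversely, order the strongly connected components linearly, compatibly with
reachability, and make a literal true iff its component comes strictly after that of its
negation. If a clause `(ξ ∨ η)` were falsified, the edges `ξ̄ → η` and `η̄ → ξ` would give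
`η̄ ≤ ξ ≤ ξ̄ ≤ η ≤ η̄`, putting `η` and `η̄` in one component.
-/

/-- Literals over `n` Boolean variables. -/
abbrev Lit (n : ℕ) := Fin n × Bool

/-- Negation of a literal. -/
def lneg {n : ℕ} (l : Lit n) : Lit n := (l.1, !l.2)

/-- The edge relation of the implication digraph of a 2-CNF formula `F`: there is an
edge `u → v` iff some clause of `F` equals `(ū ∨ v)` (each clause `(ξ ∨ η)` contributes
`ξ̄ → η` and `η̄ → ξ`). -/
def implAdj {n : ℕ} (F : Finset (Sym2 (Lit n))) (u v : Lit n) : Prop :=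
  s(lneg u, v) ∈ F

open Relation

section Reachability

variable {α : Type*} (r : α → α → Prop)

def Reach (_r : α → α → Prop) : Type _ := α

instance : Preorder (Reach r) where
  le := ReflTransGen r
  le_refl _ := ReflTransGen.refl
  le_trans _ _ _ := ReflTransGen.trans

noncomputable def reachRank (a : α) : LinearExtension (Antisymmetrization (Reach r) (· ≤ ·)) :=
  toLinearExtension (toAntisymmetrization (· ≤ ·) (a : Reach r))

variable {r}

theorem reachRank_le_of_reflTransGen {a b : α} (h : ReflTransGen r a b) :
    reachRank r a ≤ reachRank r b :=
  toLinearExtension.monotone (toAntisymmetrization_mono (α := Reach r) h)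

theorem reflTransGen_of_reachRank_eq {a b : α} (h : reachRank r a = reachRank r b) :
    ReflTransGen r a b ∧ ReflTransGen r b a :=
  Quotient.exact (s := AntisymmRel.setoid (Reach r) (· ≤ ·)) h

end Reachability

@[simp] theorem lneg_lneg {n : ℕ} (l : Lit n) : lneg (lneg l) = l := by
  simp [lneg]

section Soundness

variable {n : ℕ} {F : Finset (Sym2 (Lit n))} {a : Fin n → Bool}

theorem eq_snd_of_reflTransGen_implAdj (ha : ∀ c ∈ F, ∃ l ∈ c, a l.1 = l.2) {u v : Lit n}
    (h : ReflTransGen (implAdj F) u v) (hu : a u.1 = u.2) : a v.1 = v.2 := by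
  induction h with
  | refl => exact hu
  | tail _ hstep ih =>
    obtain ⟨l, hl, hal⟩ := ha _ hstep
    rcases Sym2.mem_iff.mp hl with rfl | rfl
    · simp [lneg, ih] at hal
    · exact hal

theorem not_reflTransGen_lneg_and_reflTransGen (ha : ∀ c ∈ F, ∃ l ∈ c, a l.1 = l.2)
    (x : Lit n) :
    ¬ (ReflTransGen (implAdj F) x (lneg x) ∧ ReflTransGen (implAdj F) (lneg x) x) := by
  rintro ⟨hpos, hneg⟩
  by_cases hx : a x.1 = x.2
  · simpa [hx, lneg] using eq_snd_of_reflTransGen_implAdj ha hpos hx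
  · have hx' : a (lneg x).1 = (lneg x).2 := Bool.eq_not_iff.mpr hx
    exact hx (by simpa [lneg] using eq_snd_of_reflTransGen_implAdj ha hneg hx')

end Soundness

section Completeness

variable {n : ℕ} (F : Finset (Sym2 (Lit n)))

noncomputable def rankAssignment (i : Fin n) : Bool :=
  decide (reachRank (implAdj F) (i, false) < reachRank (implAdj F) (i, true))

variable {F}

theorem rankAssignment_eq_iff
    (hne : ∀ l, reachRank (implAdj F) l ≠ reachRank (implAdj F) (lneg l)) (l : Lit n) :
    rankAssignment F l.1 = l.2 ↔ reachRank (implAdj F) (lneg l) < reachRank (implAdj F) l := by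
  obtain ⟨i, _ | _⟩ := l
  · simpa [rankAssignment, lneg] using (hne (i, false)).symm.le_iff_lt
  · simp [rankAssignment, lneg]

theorem rankAssignment_satisfies
    (hno : ∀ x : Lit n,
      ¬ (ReflTransGen (implAdj F) x (lneg x) ∧ ReflTransGen (implAdj F) (lneg x) x)) :
    ∀ c ∈ F, ∃ l ∈ c, rankAssignment F l.1 = l.2 := by
  have hne : ∀ l, reachRank (implAdj F) l ≠ reachRank (implAdj F) (lneg l) :=
    fun l h => hno l (reflTransGen_of_reachRank_eq h)
  intro c hc
  induction c using Sym2.ind with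
  | _ ξ η =>
    by_contra! hfalse
    have hξ : reachRank (implAdj F) ξ ≤ reachRank (implAdj F) (lneg ξ) :=
      not_lt.mp fun h => hfalse ξ (Sym2.mem_mk_left ξ η) ((rankAssignment_eq_iff hne ξ).mpr h)
    have hη : reachRank (implAdj F) η ≤ reachRank (implAdj F) (lneg η) :=
      not_lt.mp fun h => hfalse η (Sym2.mem_mk_right ξ η) ((rankAssignment_eq_iff hne η).mpr h)
    have hξη : implAdj F (lneg ξ) η := by simpa [implAdj] using hc
    have hηξ : implAdj F (lneg η) ξ := by simpa [implAdj, Sym2.eq_swap] using hc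
    refine hne η (le_antisymm hη ?_)
    calc reachRank (implAdj F) (lneg η)
        ≤ reachRank (implAdj F) ξ := reachRank_le_of_reflTransGen (.single hηξ)
      _ ≤ reachRank (implAdj F) (lneg ξ) := hξ
      _ ≤ reachRank (implAdj F) η := reachRank_le_of_reflTransGen (.single hξη)

end Completeness

theorem aspvall_plass_tarjan_general (n : ℕ) (F : Finset (Sym2 (Lit n))) :
    (∃ a : Fin n → Bool, ∀ c ∈ F, ∃ l ∈ c, a l.1 = l.2)
      ↔ ∀ x : Lit n,
          ¬ (Relation.ReflTransGen (implAdj F) x (lneg x)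
            ∧ Relation.ReflTransGen (implAdj F) (lneg x) x) :=
  ⟨fun ⟨_, ha⟩ => not_reflTransGen_lneg_and_reflTransGen ha,
    fun hno => ⟨rankAssignment F, rankAssignment_satisfies hno⟩⟩

/-- Aspvall–Plass–Tarjan: a 2-CNF formula `F` (clauses are unordered pairs of literals
with distinct underlying variables) is satisfiable iff its implication digraph contains
no contradictory circuit, i.e. there is no literal `x` with both `x ⇝ x̄` and `x̄ ⇝ x`
(no variable lies in the same strongly connected component as its negation). -/
theorem aspvall_plass_tarjan (n : ℕ) (F : Finset (Sym2 (Lit n)))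
    (hF : ∀ c ∈ F, ¬ (c.map Prod.fst).IsDiag) :
    (∃ a : Fin n → Bool, ∀ c ∈ F, ∃ l ∈ c, a l.1 = l.2)
      ↔ ∀ x : Lit n,
          ¬ (Relation.ReflTransGen (implAdj F) x (lneg x)
            ∧ Relation.ReflTransGen (implAdj F) (lneg x) x) :=
  aspvall_plass_tarjan_general n F
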